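/- arXiv:1908.05678 — 2 statements merged into one kernel-verified Lean document; each statement's English description precedes it below -/
import Mathlib

section
/- Let G be a finite disconnected simple graph with connected components G_1,...,G_s, each having at least one edge, and suppose the toric ideals I_{G_1} and I_{G_2} are both nonzero. Then the edge ring K[G] = K[G_1] ⊗_K ··· ⊗_K K[G_s] does not have a linear resolution. -/
open MvPolynomial Finset
open scoped Pointwise

/-! ## Polytope / Ehrhart definitions -/

/-- The lattice-point enumerator of dilates of `P` (with the convention `E(0) = 1`). -/
noncomputable def ehrhart {V : Type} (P : Set (V → ℝ)) (t : ℕ) : ℤ :=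
  if t = 0 then 1 else
    Nat.card {x : V → ℤ | (fun v => (x v : ℝ)) ∈ (t : ℝ) • P}

/-- The `i`-th coefficient of the `h^*`-polynomial of `P`, computed with respect to
dimension `d`, via the inversion formula
`h^*_i = ∑_{j ≤ i} (-1)^j (d+1 choose j) E(i-j)`. -/
noncomputable def hstarCoeff {V : Type} (P : Set (V → ℝ)) (d i : ℕ) : ℤ :=
  ∑ j ∈ Finset.range (i + 1), (-1 : ℤ) ^ j * (Nat.choose (d + 1) j) * ehrhart P (i - j)

/-- The dimension of `P`, i.e. the dimension of its affine hull. -/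
noncomputable def polyDim {V : Type} [Fintype V] (P : Set (V → ℝ)) : ℕ :=
  Module.finrank ℝ (vectorSpan ℝ P)

/-- The degree of the `h^*`-polynomial of `P`. -/
noncomputable def hstarDeg {V : Type} [Fintype V] (P : Set (V → ℝ)) : ℕ :=
  sSup {i : ℕ | hstarCoeff P (polyDim P) i ≠ 0}

/-- The codegree of `P`: the least positive dilation factor `r` such that the relative
interior of `r • P` contains a lattice point. -/
noncomputable def polyCodeg {V : Type} [Fintype V] (P : Set (V → ℝ)) : ℕ :=
  sInf {r : ℕ | 1 ≤ r ∧
    ∃ x : V → ℤ, (fun v => (x v : ℝ)) ∈ intrinsicInterior ℝ ((r : ℝ) • P)}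

/-! ## Edge polytopes and edge rings -/

/-- `ρ(e) = 𝐞_i + 𝐞_j` for an edge `e = {i,j}`, as a point of `ℝ^V`. -/
noncomputable def rho {V : Type} [DecidableEq V] (e : Sym2 V) : V → ℝ :=
  Sym2.lift ⟨fun a b v => (if v = a then (1 : ℝ) else 0) + (if v = b then 1 else 0),
    fun a b => by funext v; exact add_comm _ _⟩ e

/-- The edge polytope `P_G` of a graph `G`, the convex hull of the `ρ(e)`, `e ∈ E(G)`. -/
noncomputable def edgePolytope {V : Type} [DecidableEq V] (G : SimpleGraph V) :
    Set (V → ℝ) :=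
  convexHull ℝ (rho '' G.edgeSet)

/-- The monomial map `x_e ↦ t_i t_j s` (for `e = {i,j}`), from the polynomial ring on the
edges of `G` to `K[t_v : v ∈ V][s]`; the extra variable `s` is `X (Sum.inr ())`. -/
noncomputable def edgeRingHom (K : Type) [Field K] {V : Type} (G : SimpleGraph V) :
    MvPolynomial G.edgeSet K →ₐ[K] MvPolynomial (V ⊕ Unit) K :=
  MvPolynomial.aeval fun e =>
    Sym2.lift ⟨fun a b => X (Sum.inl a) * X (Sum.inl b) * X (Sum.inr ()),
      fun a b => by ring⟩ (e : Sym2 V)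

/-- The toric ideal `I_G` of the graph `G`: the kernel of the monomial map
`x_e ↦ t_i t_j s`.  The edge ring `K[G]` is (isomorphic to) the quotient by `I_G`. -/
noncomputable def toricIdeal (K : Type) [Field K] {V : Type} (G : SimpleGraph V) :
    Ideal (MvPolynomial G.edgeSet K) :=
  RingHom.ker (edgeRingHom K G)

/-- The variable corresponding to the `i`-th edge of the walk `c` (and `1` if `i` is out
of range). -/
noncomputable def edgeVar (K : Type) [Field K] {V : Type} {G : SimpleGraph V} {u v : V}
    (c : G.Walk u v) (i : ℕ) : MvPolynomial G.edgeSet K :=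
  if h : i < c.edges.length then
    MvPolynomial.X ⟨c.edges.get ⟨i, h⟩, c.edges_subset_edgeSet (c.edges.get_mem _)⟩
  else 1

/-- The binomial `f_C` of an even closed walk `C` of length `2m`: the alternating products
of the edge variables along `C`. -/
noncomputable def cycleBinomial (K : Type) [Field K] {V : Type} {G : SimpleGraph V}
    {u : V} (m : ℕ) (c : G.Walk u u) : MvPolynomial G.edgeSet K :=
  (∏ j ∈ Finset.range m, edgeVar K c (2 * j)) -
    ∏ j ∈ Finset.range m, edgeVar K c (2 * j + 1)

/-! ## Graded free resolutions -/

/-- A finite graded free resolution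
`0 → F_len → ⋯ → F_2 → F_1 → S → S/I → 0` of `S/I`, where `S = K[x_σ]` with the
standard grading, `F_i` is the graded free module with basis `B i`, the basis element
`b : B i` having degree `deg i b`.  `ε : F 1 → S` has image `I`, and the maps are graded
of degree zero. -/
structure GradedFreeRes {σ : Type} (K : Type) [Field K] (I : Ideal (MvPolynomial σ K)) where
  B : ℕ → Type
  finB : ∀ i, Finite (B i)
  len : ℕ
  empty_of_gt : ∀ i, len < i → IsEmpty (B i)
  deg : ∀ i, B i → ℕ
  ε : (B 1 →₀ MvPolynomial σ K) →ₗ[MvPolynomial σ K] MvPolynomial σ K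
  φ : ∀ i : ℕ, (B (i + 2) →₀ MvPolynomial σ K) →ₗ[MvPolynomial σ K] (B (i + 1) →₀ MvPolynomial σ K)
  range_ε : LinearMap.range ε = I
  exact_one : LinearMap.ker ε = LinearMap.range (φ 0)
  exact_succ : ∀ i, LinearMap.ker (φ i) = LinearMap.range (φ (i + 1))
  homog_ε : ∀ b : B 1, (ε (Finsupp.single b 1)).IsHomogeneous (deg 1 b)
  homog_φ : ∀ (i : ℕ) (b : B (i + 2)) (b' : B (i + 1)),
      ((φ i (Finsupp.single b 1)) b').IsHomogeneous (deg (i + 2) b - deg (i + 1) b') ∧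
        (((φ i (Finsupp.single b 1)) b') ≠ 0 → deg (i + 1) b' ≤ deg (i + 2) b)

/-- `S/I` has a `q`-linear (minimal graded free) resolution:  there is a nontrivial finite
graded free resolution of `S/I` in which the `i`-th free module is generated in the single
degree `q + i - 1` (for `i ≥ 1`). -/
def HasLinearResolution {σ : Type} (K : Type) [Field K] (I : Ideal (MvPolynomial σ K))
    (q : ℕ) : Prop :=
  ∃ F : GradedFreeRes K I, Nonempty (F.B 1) ∧
    ∀ i, 1 ≤ i → ∀ b : F.B i, F.deg i b = q + i - 1

/-- The Castelnuovo–Mumford regularity of `S/I`: the least `r` such that `S/I` admits a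
(finite) graded free resolution whose `i`-th free module is generated in degrees `≤ r + i`. -/
noncomputable def cmReg {σ : Type} (K : Type) [Field K] (I : Ideal (MvPolynomial σ K)) : ℕ :=
  sInf {r : ℕ | ∃ F : GradedFreeRes K I, ∀ i, 1 ≤ i → ∀ b : F.B i, F.deg i b ≤ r + i}

/-! ## The special graphs of the paper (0-indexed versions) -/

/-- The disjoint union of two cycles of length `n` (for `n ≥ 3`). -/
def twoCyclesGraph (n : ℕ) : SimpleGraph (Fin 2 × Fin n) :=
  SimpleGraph.fromRel fun a b =>
    a.1 = b.1 ∧ (a.2.val + 1 = b.2.val ∨ (a.2.val = n - 1 ∧ b.2.val = 0))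

/-- Two `2q`-cycles glued at the single vertex `0` (the paper's vertex `1`); a graph on
`4q - 1` vertices. -/
def wedgeGraph (q : ℕ) : SimpleGraph (Fin (4 * q - 1)) :=
  SimpleGraph.fromRel fun a b =>
    (a.val + 1 = b.val ∧ b.val ≤ 2 * q - 1) ∨ (a.val = 2 * q - 1 ∧ b.val = 0) ∨
    (a.val = 0 ∧ b.val = 2 * q) ∨ (a.val + 1 = b.val ∧ 2 * q + 1 ≤ b.val) ∨
    (a.val = 4 * q - 2 ∧ b.val = 0)

/-- The graph `G^{(e)}_{k,m}`: a `2q`-cycle on the vertices `0,…,2q-1` together with a path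
of length `2m` from vertex `0` to vertex `2k` through the new vertices `2q,…,2q+2m-2`
(this is the paper's graph, with all vertex labels shifted down by one). -/
def Ge (q k m : ℕ) : SimpleGraph (Fin (2 * q + 2 * m - 1)) :=
  SimpleGraph.fromRel fun a b =>
    (a.val + 1 = b.val ∧ b.val ≤ 2 * q - 1) ∨ (a.val = 2 * q - 1 ∧ b.val = 0) ∨
    (a.val = 0 ∧ b.val = 2 * q) ∨ (a.val + 1 = b.val ∧ 2 * q + 1 ≤ b.val) ∨
    (a.val = 2 * q + 2 * m - 2 ∧ b.val = 2 * k)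

/-- The graph `G^{(o)}_{k,m}`: a `2q`-cycle on the vertices `0,…,2q-1` together with a path
of length `2m - 1` from vertex `0` to vertex `2k - 1` through the new vertices
`2q,…,2q+2m-3` (the paper's graph, labels shifted down by one). -/
def Go (q k m : ℕ) : SimpleGraph (Fin (2 * q + 2 * m - 2)) :=
  SimpleGraph.fromRel fun a b =>
    (a.val + 1 = b.val ∧ b.val ≤ 2 * q - 1) ∨ (a.val = 2 * q - 1 ∧ b.val = 0) ∨
    (a.val = 0 ∧ b.val = 2 * q) ∨ (a.val + 1 = b.val ∧ 2 * q + 1 ≤ b.val) ∨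
    (a.val = 2 * q + 2 * m - 3 ∧ b.val = 2 * k - 1)

/-!
Let `U` be the vertex set of the component `G₁` and grade `K[x_e]` by the number of edges
inside `U`. The toric ideal `I_G` is homogeneous for this grading, and a binomial of `I_G` splits
into a binomial inside `U` and one outside `U` with the same images, one of them nontrivial.
So if `I_G` is generated in degree `q` (necessarily `q ≥ 2`), every nonzero bihomogeneous element
of `I_G` has at least `q` edges inside `U` or at least `q` outside. Hence some component of a
generator is a nonzero form `f ∈ I_G` of degree `q` living inside `U` (or outside; then swap the
roles of the two components), and the bidegree `(q - 1, 1)` components of all generators vanish.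

Let `0 ≠ g ∈ I_{G₂}`, which lives outside `U`. With linear first syzygies, the Koszul relation
`g • f - f • g` is a combination of linear syzygies. Taking its part of `U`-degree `0` and then
the part of `U`-degree `q` of `f g` expresses `f g` through the vanishing `(q - 1, 1)`
components, so `f g = 0`, which is impossible in a domain.
-/

namespace Finsupp

variable {σ : Type*}

theorem degree_filter_mem (s : Set σ) [DecidablePred (· ∈ s)] (d : σ →₀ ℕ) :
    (d.filter (· ∈ s)).degree = weight (s.indicator 1) d := by
  rw [degree_apply, support_filter, Finset.sum_filter, weight_apply, Finsupp.sum]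
  refine Finset.sum_congr rfl fun i _ => ?_
  by_cases hi : i ∈ s <;> simp [hi]

theorem weight_indicator_add_weight_indicator_compl (s : Set σ) (d : σ →₀ ℕ) :
    weight (s.indicator 1) d + weight (sᶜ.indicator 1) d = d.degree := by
  classical
  rw [← degree_filter_mem, ← degree_filter_mem, ← map_add]
  exact congrArg degree (filter_add_filter_not d _)

theorem weight_indicator_le_degree (s : Set σ) (d : σ →₀ ℕ) :
    weight (s.indicator 1) d ≤ d.degree :=
  (weight_indicator_add_weight_indicator_compl s d).le.trans' (Nat.le_add_right _ _)

theorem weight_filter_apply_eq_zero {τ : Type*} (w : σ → τ →₀ ℕ) {p : σ → Prop}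
    [DecidablePred p] (d : σ →₀ ℕ) {x : τ} (h : ∀ i, p i → w i x = 0) :
    weight w (d.filter p) x = 0 := by
  rw [weight_apply, Finsupp.sum, finsetSum_apply]
  refine Finset.sum_eq_zero fun i hi => ?_
  rw [support_filter, Finset.mem_filter] at hi
  simp [h i hi.2]

theorem linearMap_apply_eq_sum {ι S M : Type*} [Fintype ι] [CommSemiring S]
    [AddCommMonoid M] [Module S M] (f : (ι →₀ S) →ₗ[S] M) (P : ι →₀ S) :
    f P = ∑ i, P i • f (single i 1) := by
  conv_lhs => rw [← P.univ_sum_single]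
  rw [map_sum]
  exact Finset.sum_congr rfl fun i _ => by rw [← smul_single_one, map_smul]

end Finsupp

namespace MvPolynomial

section WeightedComponents

variable {σ R : Type*} [CommSemiring R] {w : σ → ℕ} {p : MvPolynomial σ R}

attribute [local instance] weightedGradedAlgebra

theorem weightedHomogeneousComponent_mul_of_le {m n : ℕ} (hp : p.IsWeightedHomogeneous w m)
    (a : MvPolynomial σ R) (h : m ≤ n) :
    weightedHomogeneousComponent w n (a * p) = weightedHomogeneousComponent w (n - m) a * p := by
  classical
  simpa [← weightedDecomposition.decompose'_apply] using
    DirectSum.coe_decompose_mul_of_right_mem_of_le (weightedHomogeneousSubmodule R w) (a := a) hp h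

theorem weightedHomogeneousComponent_mul_of_lt {m n : ℕ} (hp : p.IsWeightedHomogeneous w m)
    (a : MvPolynomial σ R) (h : n < m) :
    weightedHomogeneousComponent w n (a * p) = 0 := by
  classical
  simpa [← weightedDecomposition.decompose'_apply] using
    DirectSum.coe_decompose_mul_of_right_mem_of_not_le (weightedHomogeneousSubmodule R w)
      (a := a) hp h.not_ge

theorem weightedHomogeneousComponent_zero_mul (a b : MvPolynomial σ R) :
    weightedHomogeneousComponent w 0 (a * b) =
      weightedHomogeneousComponent w 0 a * weightedHomogeneousComponent w 0 b := by
  classical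
  simpa [← weightedDecomposition.decompose'_apply] using
    map_mul (GradedRing.projZeroRingHom (weightedHomogeneousSubmodule R w)) a b

theorem IsWeightedHomogeneous.weightedHomogeneousComponent {w' : σ → ℕ} {m : ℕ}
    (hp : p.IsWeightedHomogeneous w' m) (n : ℕ) :
    (weightedHomogeneousComponent w n p).IsWeightedHomogeneous w' m := by
  classical
  intro d hd
  rw [coeff_weightedHomogeneousComponent] at hd
  split_ifs at hd
  · exact hp hd
  · exact absurd rfl hd

end WeightedComponents

section Indicator

variable {σ R : Type*} [CommSemiring R] {s : Set σ} {p : MvPolynomial σ R}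

theorem IsHomogeneous.degree_eq {n : ℕ} (hp : p.IsHomogeneous n) {d : σ →₀ ℕ}
    (hd : coeff d p ≠ 0) : d.degree = n := by
  rw [Finsupp.degree_eq_weight_one]
  exact hp hd

theorem IsHomogeneous.isWeightedHomogeneous_indicator_compl {n k : ℕ} (hp : p.IsHomogeneous n)
    (hk : p.IsWeightedHomogeneous (s.indicator 1) k) :
    p.IsWeightedHomogeneous (sᶜ.indicator 1) (n - k) := by
  intro d hd
  have := Finsupp.weight_indicator_add_weight_indicator_compl s d
  rw [hk hd, hp.degree_eq hd] at this
  omega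

theorem isWeightedHomogeneous_indicator_zero_of_mem_supported {t : Set σ}
    (hp : p ∈ supported R t) (hts : Disjoint t s) :
    p.IsWeightedHomogeneous (s.indicator 1) 0 := by
  intro d hd
  rw [Finsupp.weight_apply, Finsupp.sum]
  refine Finset.sum_eq_zero fun i hi => ?_
  have hit : i ∈ t := mem_supported.mp hp <|
    (mem_vars_iff_mem_support i).mpr ⟨d, mem_support_iff.mpr hd, hi⟩
  simp [Set.indicator_of_notMem (hts.notMem_of_mem_left hit)]

end Indicator

theorem IsHomogeneous.sub_weightedHomogeneousComponent_zero {σ R : Type*} [CommRing R]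
    {s : Set σ} {p : MvPolynomial σ R} (hp : p.IsHomogeneous 1) :
    (p - weightedHomogeneousComponent (s.indicator 1) 0 p).IsWeightedHomogeneous
      (s.indicator 1) 1 := by
  classical
  intro d hd
  rw [coeff_sub, coeff_weightedHomogeneousComponent] at hd
  split_ifs at hd with h0
  · exact absurd (sub_self _) hd
  · have := Finsupp.weight_indicator_le_degree s d
    rw [hp.degree_eq (by simpa using hd)] at this
    omega

section MonomialMap

variable {σ τ : Type*} (K : Type*) [CommRing K] (E : σ → τ →₀ ℕ)

noncomputable def monomialMap : MvPolynomial σ K →ₐ[K] MvPolynomial τ K :=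
  aeval fun i => monomial (E i) 1

variable {K E}

theorem monomialMap_X (i : σ) : monomialMap K E (X i) = monomial (E i) 1 :=
  aeval_X _ _

theorem monomialMap_monomial (d : σ →₀ ℕ) (c : K) :
    monomialMap K E (monomial d c) = monomial (Finsupp.weight E d) c := by
  rw [monomialMap, aeval_monomial, Finsupp.prod, Finsupp.weight_apply, Finsupp.sum]
  simp only [monomial_pow, one_pow]
  rw [← monomial_sum_one, algebraMap_eq, C_mul_monomial, mul_one]

theorem coeff_monomialMap [DecidableEq (τ →₀ ℕ)] (p : MvPolynomial σ K)
    (M : τ →₀ ℕ) :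
    coeff M (monomialMap K E p) = ∑ d ∈ p.support with Finsupp.weight E d = M, coeff d p := by
  classical
  conv_lhs => rw [← support_sum_monomial_coeff p]
  simp only [map_sum, monomialMap_monomial, coeff_sum, Finset.sum_filter]
  exact Finset.sum_congr rfl fun d _ => by rw [coeff_monomial]; congr 1

theorem monomialMap_monomial_sub_monomial {d d' : σ →₀ ℕ}
    (h : Finsupp.weight E d = Finsupp.weight E d') (c : K) :
    monomialMap K E (monomial d c - monomial d' c) = 0 := by
  rw [map_sub, monomialMap_monomial, monomialMap_monomial, h, sub_self]

theorem exists_ne_weight_eq_of_monomialMap_eq_zero {p : MvPolynomial σ K}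
    (hp : monomialMap K E p = 0) (hp0 : p ≠ 0) :
    ∃ d ∈ p.support, ∃ d' ∈ p.support, d ≠ d' ∧
      Finsupp.weight E d = Finsupp.weight E d' := by
  classical
  obtain ⟨d, hd⟩ := support_nonempty.mpr hp0
  by_contra! h
  have hM := congrArg (coeff (Finsupp.weight E d)) hp
  have hmem : d ∈ {d' ∈ p.support | Finsupp.weight E d' = Finsupp.weight E d} :=
    Finset.mem_filter.mpr ⟨hd, rfl⟩
  rw [coeff_monomialMap, coeff_zero, Finset.sum_eq_single_of_mem d hmem fun d' hd' hne => ?_]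
    at hM
  · exact mem_support_iff.mp hd hM
  · obtain ⟨hd', hE⟩ := Finset.mem_filter.mp hd'
    exact absurd hE.symm (h d hd d' hd' hne.symm)

theorem monomialMap_weightedHomogeneousComponent_eq_zero {w : σ → ℕ}
    (hw : ∀ d d' : σ →₀ ℕ, Finsupp.weight E d = Finsupp.weight E d' →
      Finsupp.weight w d = Finsupp.weight w d')
    {p : MvPolynomial σ K} (hp : monomialMap K E p = 0) (n : ℕ) :
    monomialMap K E (weightedHomogeneousComponent w n p) = 0 := by
  classical
  ext M
  rw [coeff_monomialMap, coeff_zero, support_weightedHomogeneousComponent, Finset.filter_filter]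
  by_cases h : ∃ d₀ ∈ p.support, Finsupp.weight E d₀ = M ∧ Finsupp.weight w d₀ = n
  · obtain ⟨d₀, -, hE₀, hw₀⟩ := h
    have hclass : ∀ d, Finsupp.weight E d = M → Finsupp.weight w d = n :=
      fun d hd => (hw d d₀ (hd.trans hE₀.symm)).trans hw₀
    rw [← coeff_zero M, ← hp, coeff_monomialMap]
    refine Finset.sum_congr (Finset.filter_congr fun d _ => ?_) fun d hd => ?_
    · exact ⟨And.right, fun hd => ⟨hclass d hd, hd⟩⟩
    · rw [coeff_weightedHomogeneousComponent, if_pos (hclass d (Finset.mem_filter.mp hd).2)]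
  · refine Finset.sum_eq_zero fun d hd => absurd ?_ h
    obtain ⟨hd, hwd, hEd⟩ := Finset.mem_filter.mp hd
    exact ⟨d, hd, hEd, hwd⟩

theorem monomialMap_rename {σ' τ' : Type*} {E' : σ' → τ' →₀ ℕ} {f : σ → σ'}
    {g : τ → τ'}
    (h : ∀ i, E' (f i) = (E i).mapDomain g) (p : MvPolynomial σ K) :
    monomialMap K E' (rename f p) = rename g (monomialMap K E p) := by
  have : (monomialMap K E').comp (rename f) = (rename g).comp (monomialMap K E) :=
    algHom_ext fun i => by simp [monomialMap_X, rename_monomial, h]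
  exact DFunLike.congr_fun this p

end MonomialMap

end MvPolynomial

namespace GradedFreeRes

variable {σ K : Type} [Field K] {I : Ideal (MvPolynomial σ K)} (F : GradedFreeRes K I)

noncomputable def gen (b : F.B 1) : MvPolynomial σ K := F.ε (Finsupp.single b 1)

noncomputable def syz (c : F.B 2) (b : F.B 1) : MvPolynomial σ K :=
  F.φ 0 (Finsupp.single c 1) b

theorem gen_mem (b : F.B 1) : F.gen b ∈ I :=
  F.range_ε.le ⟨_, rfl⟩

section

variable {F} {q : ℕ}

theorem gen_isHomogeneous (hdeg : ∀ i, 1 ≤ i → ∀ b : F.B i, F.deg i b = q + i - 1)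
    (b : F.B 1) : (F.gen b).IsHomogeneous q := by
  have := F.homog_ε b
  rwa [hdeg 1 le_rfl b, Nat.add_sub_cancel] at this

theorem syz_isHomogeneous (hdeg : ∀ i, 1 ≤ i → ∀ b : F.B i, F.deg i b = q + i - 1)
    (c : F.B 2) (b : F.B 1) : (F.syz c b).IsHomogeneous 1 := by
  have := (F.homog_φ 0 c b).1
  rwa [hdeg 2 (by norm_num) c, hdeg 1 le_rfl b, show q + 2 - 1 - (q + 1 - 1) = 1 by omega]
    at this

end

variable [Fintype (F.B 1)]

theorem ε_apply (P : F.B 1 →₀ MvPolynomial σ K) : F.ε P = ∑ b, P b * F.gen b :=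
  Finsupp.linearMap_apply_eq_sum F.ε P

theorem exists_eq_sum_mul_gen {p : MvPolynomial σ K} (hp : p ∈ I) :
    ∃ P : F.B 1 → MvPolynomial σ K, p = ∑ b, P b * F.gen b := by
  rw [← F.range_ε] at hp
  obtain ⟨P, rfl⟩ := hp
  exact ⟨P, F.ε_apply P⟩

theorem sum_syz_mul_gen (c : F.B 2) : ∑ b, F.syz c b * F.gen b = 0 := by
  have hker : F.φ 0 (Finsupp.single c 1) ∈ LinearMap.ker F.ε := F.exact_one ▸ ⟨_, rfl⟩
  exact (F.ε_apply _).symm.trans hker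

theorem exists_eq_sum_mul_syz [Fintype (F.B 2)] (v : F.B 1 → MvPolynomial σ K)
    (hv : ∑ b, v b * F.gen b = 0) :
    ∃ u : F.B 2 → MvPolynomial σ K, ∀ b, v b = ∑ c, u c * F.syz c b := by
  obtain ⟨u, hu⟩ : Finsupp.equivFunOnFinite.symm v ∈ LinearMap.range (F.φ 0) := by
    rw [← F.exact_one, LinearMap.mem_ker, ε_apply]
    simpa using hv
  refine ⟨u, fun b => ?_⟩
  have hb := congrArg (· b) hu
  simp only [Finsupp.linearMap_apply_eq_sum (F.φ 0) u, Finsupp.finsetSum_apply] at hb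
  simpa [syz] using hb.symm

variable {F} {q : ℕ}

theorem le_of_isHomogeneous (hgen : ∀ b, (F.gen b).IsHomogeneous q) {p : MvPolynomial σ K}
    (hp : p ∈ I) (hp0 : p ≠ 0) {n : ℕ} (hpn : p.IsHomogeneous n) : q ≤ n := by
  by_contra! hnq
  obtain ⟨P, rfl⟩ := F.exists_eq_sum_mul_gen hp
  refine hp0 ((weightedHomogeneousComponent_eq_self hpn).symm.trans ?_)
  rw [map_sum]
  exact Finset.sum_eq_zero fun b _ =>
    weightedHomogeneousComponent_mul_of_lt (hgen b) (P b) hnq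

theorem le_degree_of_monomial_sub_monomial_mem (hgen : ∀ b, (F.gen b).IsHomogeneous q)
    {d d' : σ →₀ ℕ} (hne : d ≠ d') (hdeg : d.degree = d'.degree)
    (hmem : monomial d (1 : K) - monomial d' 1 ∈ I) : q ≤ d.degree :=
  le_of_isHomogeneous hgen hmem (sub_ne_zero.mpr ((monomial_left_injective one_ne_zero).ne hne))
    ((isHomogeneous_monomial _ rfl).sub (isHomogeneous_monomial _ hdeg.symm))

theorem exists_eq_sum_C_mul_gen (hgen : ∀ b, (F.gen b).IsHomogeneous q)
    {p : MvPolynomial σ K} (hp : p ∈ I) (hpq : p.IsHomogeneous q) :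
    ∃ a : F.B 1 → K, p = ∑ b, C (a b) * F.gen b := by
  obtain ⟨P, rfl⟩ := F.exists_eq_sum_mul_gen hp
  refine ⟨fun b => coeff 0 (P b), (weightedHomogeneousComponent_eq_self hpq).symm.trans ?_⟩
  rw [map_sum]
  refine Finset.sum_congr rfl fun b _ => ?_
  rw [weightedHomogeneousComponent_mul_of_le (hgen b) (P b) le_rfl, Nat.sub_self,
    ← homogeneousComponent_zero]
  rfl

/-- The Koszul relation `g • f - f • g` is a combination of the linear syzygies; splitting these
by `s`-degree writes `f * g` in terms of the `s`-degree `q - 1` parts of the generators. -/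
theorem mul_eq_zero_of_linear_syz [Fintype (F.B 2)] (hq : 0 < q)
    (hgen : ∀ b, (F.gen b).IsHomogeneous q) (hsyz : ∀ c b, (F.syz c b).IsHomogeneous 1)
    {s : Set σ}
    (hgen' : ∀ b, weightedHomogeneousComponent (s.indicator 1) (q - 1) (F.gen b) = 0)
    {f g : MvPolynomial σ K} (hf : f ∈ I) (hfq : f.IsHomogeneous q)
    (hfs : f.IsWeightedHomogeneous (s.indicator 1) q)
    (hg : g ∈ I) (hgs : g.IsWeightedHomogeneous (s.indicator 1) 0) : f * g = 0 := by
  set π := weightedHomogeneousComponent (R := K) (s.indicator 1) 0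
  obtain ⟨a, hfa⟩ := exists_eq_sum_C_mul_gen hgen hf hfq
  obtain ⟨R, hgR⟩ := F.exists_eq_sum_mul_gen hg
  obtain ⟨u, hu⟩ := F.exists_eq_sum_mul_syz (fun b => g * C (a b) - f * R b) <| by
    simp only [sub_mul, Finset.sum_sub_distrib, mul_assoc, ← Finset.mul_sum, ← hfa, ← hgR]
    ring
  have hgen0 : ∀ b, g * C (a b) = ∑ c, π (u c) * π (F.syz c b) := by
    intro b
    have hb := congrArg π (hu b)
    have hgC : (g * C (a b)).IsWeightedHomogeneous (s.indicator 1) 0 := by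
      simpa using hgs.mul (isWeightedHomogeneous_C _ _)
    rwa [map_sub, weightedHomogeneousComponent_eq_self hgC, mul_comm f,
      weightedHomogeneousComponent_mul_of_lt hfs _ hq, sub_zero, map_sum,
      Finset.sum_congr rfl fun c _ => weightedHomogeneousComponent_zero_mul _ _] at hb
  have hsyz0 : ∀ c, ∑ b, π (F.syz c b) * F.gen b =
      -∑ b, (F.syz c b - π (F.syz c b)) * F.gen b := by
    intro c
    rw [eq_neg_iff_add_eq_zero, ← Finset.sum_add_distrib, ← F.sum_syz_mul_gen c]
    exact Finset.sum_congr rfl fun b _ => by ring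
  have hfg : f * g = -∑ c, ∑ b, π (u c) * (F.syz c b - π (F.syz c b)) * F.gen b := by
    calc f * g = ∑ b, g * C (a b) * F.gen b := by
          rw [hfa, Finset.sum_mul]
          exact Finset.sum_congr rfl fun b _ => by ring
      _ = ∑ c, π (u c) * ∑ b, π (F.syz c b) * F.gen b := by
          simp only [hgen0, Finset.sum_mul, Finset.mul_sum, mul_assoc]
          exact Finset.sum_comm
      _ = _ := by
          simp only [hsyz0, mul_neg, Finset.sum_neg_distrib, Finset.mul_sum, mul_assoc]
  have hdeg1 : ∀ c b, (π (u c) * (F.syz c b - π (F.syz c b))).IsWeightedHomogeneous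
      (s.indicator 1) 1 := fun c b => by
    simpa using (weightedHomogeneousComponent_isWeightedHomogeneous 0 (u c)).mul
      (hsyz c b).sub_weightedHomogeneousComponent_zero
  have hfgs : (f * g).IsWeightedHomogeneous (s.indicator 1) q := by simpa using hfs.mul hgs
  rw [← weightedHomogeneousComponent_eq_self hfgs, hfg, map_neg, map_sum]
  simp only [map_sum]
  refine neg_eq_zero.mpr (Finset.sum_eq_zero fun c _ => Finset.sum_eq_zero fun b _ => ?_)
  rw [mul_comm, weightedHomogeneousComponent_mul_of_le (hdeg1 c b) _ hq, hgen' b, zero_mul]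

end GradedFreeRes

section EdgeRing

open Sum

variable {V : Type}

/-- The exponent vector of `t_a t_b s`, the image of the edge `{a, b}` in the edge ring. -/
noncomputable def edgeExponent : Sym2 V → (V ⊕ Unit) →₀ ℕ :=
  Sym2.lift ⟨fun a b => Finsupp.single (inl a) 1 + Finsupp.single (inl b) 1 +
      Finsupp.single (inr ()) 1,
    fun _ _ => congrArg (· + Finsupp.single (inr ()) 1) (add_comm _ _)⟩

@[simp]
theorem edgeExponent_mk (a b : V) :
    edgeExponent s(a, b) = Finsupp.single (inl a) 1 + Finsupp.single (inl b) 1 +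
      Finsupp.single (inr ()) 1 := rfl

theorem edgeExponent_inr (e : Sym2 V) : edgeExponent e (inr ()) = 1 := by
  induction e using Sym2.inductionOn with
  | hf a b => simp

theorem edgeExponent_inl_ne_zero_iff {e : Sym2 V} {v : V} :
    edgeExponent e (inl v) ≠ 0 ↔ v ∈ e := by
  induction e using Sym2.inductionOn with
  | hf a b =>
    classical
    simp only [edgeExponent_mk, Finsupp.add_apply, Finsupp.single_apply, inl.injEq,
      reduceCtorEq, if_false, add_zero, Sym2.mem_iff]
    split_ifs <;> simp_all [eq_comm]

theorem edgeExponent_injective : Function.Injective (edgeExponent (V := V)) := fun e e' h =>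
  Sym2.ext fun v => by rw [← edgeExponent_inl_ne_zero_iff, ← edgeExponent_inl_ne_zero_iff, h]

theorem edgeExponent_map {W : Type} (f : V → W) (e : Sym2 V) :
    edgeExponent (e.map f) = (edgeExponent e).mapDomain (Sum.map f id) := by
  induction e using Sym2.inductionOn with
  | hf a b => simp [Finsupp.mapDomain_add, Finsupp.mapDomain_single]

variable (K : Type) [Field K] (G : SimpleGraph V)

noncomputable abbrev SimpleGraph.edgeExponents : G.edgeSet → (V ⊕ Unit) →₀ ℕ :=
  fun e => edgeExponent (e : Sym2 V)

theorem edgeRingHom_eq_monomialMap : edgeRingHom K G = monomialMap K G.edgeExponents := by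
  refine MvPolynomial.algHom_ext fun ⟨e, he⟩ => ?_
  rw [edgeRingHom, aeval_X, monomialMap_X]
  induction e using Sym2.inductionOn with
  | hf a b =>
    simp only [Sym2.lift_mk, X, monomial_mul, mul_one]
    rfl

variable {K G}

theorem mem_toricIdeal_iff {p : MvPolynomial G.edgeSet K} :
    p ∈ toricIdeal K G ↔ monomialMap K G.edgeExponents p = 0 := by
  rw [toricIdeal, RingHom.mem_ker, edgeRingHom_eq_monomialMap]

theorem weight_edgeExponents_inr (d : G.edgeSet →₀ ℕ) :
    Finsupp.weight G.edgeExponents d (inr ()) = d.degree := by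
  simp [Finsupp.weight_apply, Finsupp.sum, Finsupp.finsetSum_apply, edgeExponent_inr,
    Finsupp.degree_apply]

theorem two_le_degree_of_weight_edgeExponents_eq {d d' : G.edgeSet →₀ ℕ} (hne : d ≠ d')
    (h : Finsupp.weight G.edgeExponents d = Finsupp.weight G.edgeExponents d') :
    2 ≤ d.degree := by
  have hdeg : d.degree = d'.degree := by
    rw [← weight_edgeExponents_inr, ← weight_edgeExponents_inr, h]
  by_contra! h2
  obtain hd | hd : d.degree = 0 ∨ d.degree = 1 := by omega
  · rw [hd, eq_comm, Finsupp.degree_eq_zero_iff] at hdeg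
    exact hne (((Finsupp.degree_eq_zero_iff d).mp hd).trans hdeg.symm)
  · have hd' : d' ∈ {x : G.edgeSet →₀ ℕ | x.degree = 1} := hdeg.symm.trans hd
    replace hd : d ∈ {x : G.edgeSet →₀ ℕ | x.degree = 1} := hd
    rw [← Finsupp.range_single_one] at hd hd'
    obtain ⟨e, rfl⟩ := hd
    obtain ⟨e', rfl⟩ := hd'
    simp only [Finsupp.weight_single, one_smul] at h
    exact hne (by rw [Subtype.ext (edgeExponent_injective h)])

theorem two_le_of_isHomogeneous_mem_toricIdeal {p : MvPolynomial G.edgeSet K}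
    (hp : p ∈ toricIdeal K G) (hp0 : p ≠ 0) {n : ℕ} (hpn : p.IsHomogeneous n) : 2 ≤ n := by
  obtain ⟨d, hd, d', -, hne, h⟩ :=
    exists_ne_weight_eq_of_monomialMap_eq_zero (mem_toricIdeal_iff.mp hp) hp0
  rw [← hpn.degree_eq (mem_support_iff.mp hd)]
  exact two_le_degree_of_weight_edgeExponents_eq hne h

end EdgeRing

section AdjClosed

open Sum

variable {V : Type}

/-- `U` is a union of vertex sets of connected components of `G`. -/
def SimpleGraph.IsAdjClosed (G : SimpleGraph V) (U : Set V) : Prop :=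
  ∀ ⦃a b⦄, G.Adj a b → a ∈ U → b ∈ U

def SimpleGraph.edgesWithin (G : SimpleGraph V) (U : Set V) : Set G.edgeSet :=
  {e | ∀ v ∈ (e : Sym2 V), v ∈ U}

variable {K : Type} [Field K] {G : SimpleGraph V} {U : Set V}

theorem SimpleGraph.ConnectedComponent.isAdjClosed_supp (c : G.ConnectedComponent) :
    G.IsAdjClosed c.supp :=
  fun _ _ hadj hu => c.mem_supp_of_adj_mem_supp hu hadj

theorem SimpleGraph.disjoint_edgesWithin {W : Set V} (h : Disjoint U W) :
    Disjoint (G.edgesWithin U) (G.edgesWithin W) := by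
  refine Set.disjoint_left.mpr fun ⟨e, _⟩ heU heW => ?_
  induction e using Sym2.inductionOn with
  | hf a b =>
    exact Set.disjoint_left.mp h (heU a (Sym2.mem_mk_left a b)) (heW a (Sym2.mem_mk_left a b))

theorem SimpleGraph.edgesWithin_mono {U W : Set V} (h : U ⊆ W) :
    G.edgesWithin U ⊆ G.edgesWithin W :=
  fun _ he v hv => h (he v hv)

theorem exists_mem_toricIdeal_mem_supported_edgesWithin
    (h : toricIdeal K (G.induce U) ≠ ⊥) :
    ∃ p ∈ toricIdeal K G, p ≠ 0 ∧ p ∈ supported K (G.edgesWithin U) := by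
  classical
  obtain ⟨p, hp, hp0⟩ := Submodule.exists_mem_ne_zero_of_ne_bot h
  let ι := (SimpleGraph.Embedding.induce (G := G) U).mapEdgeSet
  refine ⟨rename ι p, ?_, fun h0 => ?_, ?_⟩
  · rw [mem_toricIdeal_iff, monomialMap_rename (fun e => edgeExponent_map _ _),
      mem_toricIdeal_iff.mp hp, map_zero]
  · exact hp0 (rename_injective ι ι.injective (h0.trans (map_zero _).symm))
  · rw [mem_supported]
    intro e he v hv
    obtain ⟨e', -, rfl⟩ := Finset.mem_image.mp (vars_rename ι p he)
    obtain ⟨w, -, rfl⟩ := Sym2.mem_map.mp hv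
    exact w.2

namespace SimpleGraph.IsAdjClosed

theorem compl (hU : G.IsAdjClosed U) : G.IsAdjClosed Uᶜ :=
  fun _ _ hadj ha hb => ha (hU hadj.symm hb)

theorem compl_edgesWithin (hU : G.IsAdjClosed U) : (G.edgesWithin U)ᶜ = G.edgesWithin Uᶜ := by
  refine Set.ext fun ⟨e, he⟩ => ⟨fun h => ?_, fun h h' =>
    Set.disjoint_left.mp (disjoint_edgesWithin disjoint_compl_right) h' h⟩
  induction e using Sym2.inductionOn with
  | hf a b =>
    have ha : a ∉ U := fun ha => h fun v hv => by
      rcases Sym2.mem_iff.mp hv with rfl | rfl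
      exacts [ha, hU he ha]
    intro v hv
    rcases Sym2.mem_iff.mp hv with rfl | rfl
    exacts [ha, hU.compl he ha]

/-- The handshake lemma for the edges inside `U`. -/
theorem two_mul_weight_indicator_edgesWithin (hU : G.IsAdjClosed U)
    [DecidablePred (· ∈ (Sum.inl '' U : Set (V ⊕ Unit)))] (d : G.edgeSet →₀ ℕ) :
    ((Finsupp.weight G.edgeExponents d).filter (· ∈ (Sum.inl '' U : Set (V ⊕ Unit)))).degree =
      2 * Finsupp.weight ((G.edgesWithin U).indicator 1) d := by
  have hedge : ∀ e : G.edgeSet,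
      ((G.edgeExponents e).filter (· ∈ (Sum.inl '' U : Set (V ⊕ Unit)))).degree =
        2 * (G.edgesWithin U).indicator 1 e := by
    rintro ⟨e, he⟩
    induction e using Sym2.inductionOn with
    | hf a b =>
      by_cases ha : a ∈ U
      · have hb : b ∈ U := hU he ha
        have hin : (⟨s(a, b), he⟩ : G.edgeSet) ∈ G.edgesWithin U := fun v hv => by
          rcases Sym2.mem_iff.mp hv with rfl | rfl <;> assumption
        simp [SimpleGraph.edgeExponents, ha, hb, hin]
      · have hb : b ∉ U := fun hb => ha (hU he.symm hb)
        have hout : (⟨s(a, b), he⟩ : G.edgeSet) ∉ G.edgesWithin U :=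
          fun h => ha (h a (Sym2.mem_mk_left a b))
        simp [SimpleGraph.edgeExponents, ha, hb, hout]
  let L := Finsupp.degree.comp
    (Finsupp.filterAddHom (M := ℕ) (· ∈ (Sum.inl '' U : Set (V ⊕ Unit))))
  change L _ = _
  rw [Finsupp.weight_apply, map_finsuppSum, Finsupp.weight_apply, Finsupp.mul_sum]
  refine Finsupp.sum_congr fun e _ => ?_
  rw [map_nsmul, smul_eq_mul, smul_eq_mul, mul_left_comm, ← hedge e]
  rfl

theorem weight_indicator_edgesWithin_eq (hU : G.IsAdjClosed U) {d d' : G.edgeSet →₀ ℕ}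
    (h : Finsupp.weight G.edgeExponents d = Finsupp.weight G.edgeExponents d') :
    Finsupp.weight ((G.edgesWithin U).indicator (1 : G.edgeSet → ℕ)) d =
      Finsupp.weight ((G.edgesWithin U).indicator 1) d' := by
  classical
  have hd := hU.two_mul_weight_indicator_edgesWithin d
  rw [h, hU.two_mul_weight_indicator_edgesWithin d'] at hd
  omega

theorem weight_filter_edgesWithin_eq (hU : G.IsAdjClosed U)
    [DecidablePred (· ∈ G.edgesWithin U)] {d d' : G.edgeSet →₀ ℕ}
    (h : Finsupp.weight G.edgeExponents d = Finsupp.weight G.edgeExponents d') :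
    Finsupp.weight G.edgeExponents (d.filter (· ∈ G.edgesWithin U)) =
      Finsupp.weight G.edgeExponents (d'.filter (· ∈ G.edgesWithin U)) := by
  have hinl : ∀ (x : G.edgeSet →₀ ℕ) (v : V), v ∈ U →
      Finsupp.weight G.edgeExponents (x.filter (· ∈ G.edgesWithin U)) (inl v) =
        Finsupp.weight G.edgeExponents x (inl v) := by
    intro x v hv
    conv_rhs => rw [← Finsupp.filter_add_filter_not x (· ∈ G.edgesWithin U), map_add]
    rw [Finsupp.add_apply, Finsupp.weight_filter_apply_eq_zero (p := (· ∉ G.edgesWithin U)) _ _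
      fun e he => ?_, add_zero]
    rw [← Set.mem_compl_iff, hU.compl_edgesWithin] at he
    exact not_ne_iff.mp fun hne => he v (edgeExponent_inl_ne_zero_iff.mp hne) hv
  have hout : ∀ (x : G.edgeSet →₀ ℕ) (v : V), v ∉ U →
      Finsupp.weight G.edgeExponents (x.filter (· ∈ G.edgesWithin U)) (inl v) = 0 :=
    fun x v hv => Finsupp.weight_filter_apply_eq_zero _ _ fun e he =>
      not_ne_iff.mp fun hne => hv (he v (edgeExponent_inl_ne_zero_iff.mp hne))
  ext (v | _)
  · by_cases hv : v ∈ U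
    · rw [hinl d v hv, hinl d' v hv, h]
    · rw [hout d v hv, hout d' v hv]
  · rw [weight_edgeExponents_inr, weight_edgeExponents_inr, Finsupp.degree_filter_mem,
      Finsupp.degree_filter_mem, hU.weight_indicator_edgesWithin_eq h]

theorem weightedHomogeneousComponent_mem_toricIdeal (hU : G.IsAdjClosed U)
    {p : MvPolynomial G.edgeSet K} (hp : p ∈ toricIdeal K G) (n : ℕ) :
    weightedHomogeneousComponent ((G.edgesWithin U).indicator 1) n p ∈ toricIdeal K G :=
  mem_toricIdeal_iff.mpr <| monomialMap_weightedHomogeneousComponent_eq_zero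
    (fun _ _ h => hU.weight_indicator_edgesWithin_eq h) (mem_toricIdeal_iff.mp hp) n

/-- Splitting a binomial of the toric ideal into its parts inside `U` and outside `U` gives a
binomial of the toric ideal in one of the two parts. -/
theorem le_or_le_of_mem_toricIdeal (hU : G.IsAdjClosed U) {q : ℕ}
    (hmin : ∀ d d' : G.edgeSet →₀ ℕ, d ≠ d' →
      Finsupp.weight G.edgeExponents d = Finsupp.weight G.edgeExponents d' → q ≤ d.degree)
    {p : MvPolynomial G.edgeSet K} (hp : p ∈ toricIdeal K G) (hp0 : p ≠ 0) {k l : ℕ}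
    (hk : p.IsWeightedHomogeneous ((G.edgesWithin U).indicator 1) k)
    (hl : p.IsWeightedHomogeneous ((G.edgesWithin U)ᶜ.indicator 1) l) : q ≤ k ∨ q ≤ l := by
  classical
  set S := G.edgesWithin U
  obtain ⟨d, hd, d', -, hne, h⟩ :=
    exists_ne_weight_eq_of_monomialMap_eq_zero (mem_toricIdeal_iff.mp hp) hp0
  have hA := hU.weight_filter_edgesWithin_eq h
  by_cases hAe : d.filter (· ∈ S) = d'.filter (· ∈ S)
  · right
    have hsplit := fun x : G.edgeSet →₀ ℕ => congrArg (Finsupp.weight G.edgeExponents)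
      (Finsupp.filter_add_filter_not x (· ∈ S))
    have hB : Finsupp.weight G.edgeExponents (d.filter (· ∉ S)) =
        Finsupp.weight G.edgeExponents (d'.filter (· ∉ S)) := by
      have hdd' := (hsplit d).trans (h.trans (hsplit d').symm)
      rw [map_add, map_add, hA] at hdd'
      exact add_left_cancel hdd'
    have hBne : d.filter (· ∉ S) ≠ d'.filter (· ∉ S) := fun hBe => hne <| by
      rw [← Finsupp.filter_add_filter_not d (· ∈ S),
        ← Finsupp.filter_add_filter_not d' (· ∈ S), hAe, hBe]
    calc q ≤ (d.filter (· ∉ S)).degree := hmin _ _ hBne hB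
      _ = l := by
        rw [← hl (mem_support_iff.mp hd)]
        convert Finsupp.degree_filter_mem Sᶜ d
  · left
    calc q ≤ (d.filter (· ∈ S)).degree := hmin _ _ hAe hA
      _ = k := by rw [Finsupp.degree_filter_mem, hk (mem_support_iff.mp hd)]

theorem exists_mem_toricIdeal_isWeightedHomogeneous (hU : G.IsAdjClosed U) {q : ℕ}
    (hmin : ∀ d d' : G.edgeSet →₀ ℕ, d ≠ d' →
      Finsupp.weight G.edgeExponents d = Finsupp.weight G.edgeExponents d' → q ≤ d.degree)
    {p : MvPolynomial G.edgeSet K} (hp : p ∈ toricIdeal K G) (hp0 : p ≠ 0)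
    (hpq : p.IsHomogeneous q) :
    ∃ f ∈ toricIdeal K G, f ≠ 0 ∧ f.IsHomogeneous q ∧
      (f.IsWeightedHomogeneous ((G.edgesWithin U).indicator 1) q ∨
        f.IsWeightedHomogeneous ((G.edgesWithin U)ᶜ.indicator 1) q) := by
  classical
  obtain ⟨d, hd⟩ := support_nonempty.mpr hp0
  set w := (G.edgesWithin U).indicator (1 : G.edgeSet → ℕ)
  set i := Finsupp.weight w d
  have hf0 : weightedHomogeneousComponent w i p ≠ 0 := fun h0 => mem_support_iff.mp hd <| by
    simpa [coeff_weightedHomogeneousComponent, i] using congrArg (coeff d) h0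
  have hfq : (weightedHomogeneousComponent w i p).IsHomogeneous q :=
    IsWeightedHomogeneous.weightedHomogeneousComponent hpq i
  have hfw := weightedHomogeneousComponent_isWeightedHomogeneous (R := K) (w := w) i p
  have hiq : i ≤ q :=
    (Finsupp.weight_indicator_le_degree _ d).trans (hpq.degree_eq (mem_support_iff.mp hd)).le
  refine ⟨_, hU.weightedHomogeneousComponent_mem_toricIdeal hp i, hf0, hfq, ?_⟩
  have hfw' := hfq.isWeightedHomogeneous_indicator_compl hfw
  rcases hU.le_or_le_of_mem_toricIdeal hmin (hU.weightedHomogeneousComponent_mem_toricIdeal hp i)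
    hf0 hfw hfw' with h | h
  · exact Or.inl (by convert hfw using 1; omega)
  · exact Or.inr (by convert hfw' using 1; omega)

theorem mul_eq_zero_of_linear_syz (hU : G.IsAdjClosed U) {F : GradedFreeRes K (toricIdeal K G)}
    [Fintype (F.B 1)] [Fintype (F.B 2)] {q : ℕ} (hq : 2 ≤ q)
    (hgen : ∀ b, (F.gen b).IsHomogeneous q) (hsyz : ∀ c b, (F.syz c b).IsHomogeneous 1)
    (hmin : ∀ d d' : G.edgeSet →₀ ℕ, d ≠ d' →
      Finsupp.weight G.edgeExponents d = Finsupp.weight G.edgeExponents d' → q ≤ d.degree)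
    {f g : MvPolynomial G.edgeSet K} (hf : f ∈ toricIdeal K G) (hfq : f.IsHomogeneous q)
    (hfU : f.IsWeightedHomogeneous ((G.edgesWithin U).indicator 1) q)
    (hg : g ∈ toricIdeal K G) (hgU : g ∈ supported K (G.edgesWithin Uᶜ)) : f * g = 0 := by
  refine F.mul_eq_zero_of_linear_syz (by omega) hgen hsyz (fun b => ?_) hf hfq hfU hg
    (isWeightedHomogeneous_indicator_zero_of_mem_supported hgU
      (disjoint_edgesWithin disjoint_compl_left))
  by_contra h0
  set w := (G.edgesWithin U).indicator (1 : G.edgeSet → ℕ)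
  have hw := weightedHomogeneousComponent_isWeightedHomogeneous (w := w) (q - 1) (F.gen b)
  have hq' : (weightedHomogeneousComponent w (q - 1) (F.gen b)).IsHomogeneous q :=
    IsWeightedHomogeneous.weightedHomogeneousComponent (hgen b) _
  rcases hU.le_or_le_of_mem_toricIdeal hmin
    (hU.weightedHomogeneousComponent_mem_toricIdeal (F.gen_mem b) _) h0 hw
    (hq'.isWeightedHomogeneous_indicator_compl hw) with h | h <;> omega

theorem not_hasLinearResolution (hU : G.IsAdjClosed U) {f g : MvPolynomial G.edgeSet K}
    (hf : f ∈ toricIdeal K G) (hf0 : f ≠ 0) (hfU : f ∈ supported K (G.edgesWithin U))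
    (hg : g ∈ toricIdeal K G) (hg0 : g ≠ 0) (hgU : g ∈ supported K (G.edgesWithin Uᶜ))
    (q : ℕ) : ¬HasLinearResolution K (toricIdeal K G) q := by
  rintro ⟨F, -, hdeg⟩
  have := F.finB 1
  have := F.finB 2
  let := Fintype.ofFinite (F.B 1)
  let := Fintype.ofFinite (F.B 2)
  have hgen := GradedFreeRes.gen_isHomogeneous hdeg
  have hsyz := GradedFreeRes.syz_isHomogeneous hdeg
  have hmin : ∀ d d' : G.edgeSet →₀ ℕ, d ≠ d' →
      Finsupp.weight G.edgeExponents d = Finsupp.weight G.edgeExponents d' → q ≤ d.degree :=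
    fun d d' hne h => GradedFreeRes.le_degree_of_monomial_sub_monomial_mem hgen hne
      (by rw [← weight_edgeExponents_inr, h, weight_edgeExponents_inr])
      (mem_toricIdeal_iff.mpr (monomialMap_monomial_sub_monomial h 1))
  obtain ⟨b, hb⟩ : ∃ b, F.gen b ≠ 0 := by
    by_contra! h0
    obtain ⟨P, rfl⟩ := F.exists_eq_sum_mul_gen hf
    simp [h0] at hf0
  have hq := two_le_of_isHomogeneous_mem_toricIdeal (F.gen_mem b) hb (hgen b)
  obtain ⟨f', hf', hf'0, hf'q, hf'U | hf'U⟩ :=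
    hU.exists_mem_toricIdeal_isWeightedHomogeneous hmin (F.gen_mem b) hb (hgen b)
  · exact mul_ne_zero hf'0 hg0
      (hU.mul_eq_zero_of_linear_syz hq hgen hsyz hmin hf' hf'q hf'U hg hgU)
  · rw [hU.compl_edgesWithin] at hf'U
    exact mul_ne_zero hf'0 hf0
      (hU.compl.mul_eq_zero_of_linear_syz hq hgen hsyz hmin hf' hf'q hf'U hf (by rwa [compl_compl]))

end SimpleGraph.IsAdjClosed

end AdjClosed

theorem stmt_1_general {V : Type} (K : Type) [Field K] (G : SimpleGraph V)
    (c₁ c₂ : G.ConnectedComponent) (hne : c₁ ≠ c₂)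
    (h₁ : toricIdeal K (G.induce c₁.supp) ≠ ⊥)
    (h₂ : toricIdeal K (G.induce c₂.supp) ≠ ⊥) :
    ∀ q : ℕ, ¬ HasLinearResolution K (toricIdeal K G) q := by
  obtain ⟨f, hf, hf0, hfU⟩ := exists_mem_toricIdeal_mem_supported_edgesWithin h₁
  obtain ⟨g, hg, hg0, hgU⟩ := exists_mem_toricIdeal_mem_supported_edgesWithin h₂
  have hsupp : c₂.supp ⊆ c₁.suppᶜ :=
    (G.pairwise_disjoint_supp_connectedComponent hne).subset_compl_left
  exact c₁.isAdjClosed_supp.not_hasLinearResolution hf hf0 hfU hg hg0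
    (supported_mono (SimpleGraph.edgesWithin_mono hsupp) hgU)

/-- If a finite simple graph `G` is disconnected, every connected
component has an edge, and two of its components have nonzero toric ideal, then the edge
ring `K[G]` has no linear resolution. -/
theorem stmt_1 {V : Type} [Fintype V] (K : Type) [Field K] (G : SimpleGraph V)
    (hdisc : ¬ G.Connected)
    (hedge : ∀ v : V, ∃ w : V, G.Adj v w)
    (c₁ c₂ : G.ConnectedComponent) (hne : c₁ ≠ c₂)
    (h₁ : toricIdeal K (G.induce c₁.supp) ≠ ⊥)
    (h₂ : toricIdeal K (G.induce c₂.supp) ≠ ⊥) :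
    ∀ q : ℕ, ¬ HasLinearResolution K (toricIdeal K G) q :=
  stmt_1_general K G c₁ c₂ hne h₁ h₂
end

section
/- Let q ≥ 3 and let G' be the disjoint union of two cycles of length 2q, a graph on 4q vertices with 4q edges. Then the codegree of the edge polytope P_{G'} is at most 2q; equivalently, the interior of 2q · P_{G'} contains a lattice point, namely e_1 + e_2 + ··· + e_{4q}. -/
open MvPolynomial Finset
open scoped Pointwise

/-! The edges of two disjoint `2q`-cycles are the pairs `{v, σ v}` for the rotation `σ` of each
cycle, so every vertex lies on exactly two of them and the uniform average of the vectors
`e_i + e_j` is the constant vector `1 / (2q)`. An average with all weights positive lies in the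
relative interior of the convex hull, and dilating by `2q` gives the all-ones vector. -/

theorem span_range_sub_eq_vectorSpan {k E ι : Type*} [Ring k] [AddCommGroup E] [Module k E]
    (f : ι → E) {x : E} (hx : x ∈ affineSpan k (Set.range f)) :
    Submodule.span k (Set.range fun i => f i - x) = vectorSpan k (Set.range f) := by
  rw [← vectorSpan_insert_eq_vectorSpan hx,
    vectorSpan_eq_span_vsub_set_right k (Set.mem_insert x _), Set.image_insert_eq, vsub_self,
    Submodule.span_insert_zero, ← Set.range_comp]
  rfl

/- The combinations `x + ∑ cᵢ (fᵢ - x)` with `c` near `0` cover a neighbourhood of `x` in the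
affine span (the linear map `c ↦ ∑ cᵢ (fᵢ - x)` onto the direction is open), and for small `c`
their weights `(1 - ∑ c) w + c` stay positive. -/
theorem sum_smul_mem_intrinsicInterior_convexHull {ι E : Type*} [Fintype ι]
    [AddCommGroup E] [Module ℝ E] [TopologicalSpace E] [IsTopologicalAddGroup E]
    [ContinuousSMul ℝ E] [T2Space E] [FiniteDimensional ℝ E]
    (f : ι → E) {w : ι → ℝ} (hw : ∀ i, 0 < w i) (hw1 : ∑ i, w i = 1) :
    ∑ i, w i • f i ∈ intrinsicInterior ℝ (convexHull ℝ (Set.range f)) := by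
  set x := ∑ i, w i • f i
  set A := affineSpan ℝ (Set.range f)
  have hx : x ∈ A := by
    simpa [Finset.affineCombination_eq_linear_combination _ _ _ hw1] using
      affineCombination_mem_affineSpan (k := ℝ) (s := univ) hw1 f
  set L := Fintype.linearCombination ℝ fun i => f i - x
  have hL : LinearMap.range L = A.direction := by
    rw [Fintype.range_linearCombination, span_range_sub_eq_vectorSpan f hx, direction_affineSpan]
  let L₀ : (ι → ℝ) →ₗ[ℝ] A.direction :=
    L.codRestrict A.direction fun c => hL ▸ LinearMap.mem_range_self L c
  have hL₀ : IsOpenMap L₀ := by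
    refine L₀.isOpenMap_of_finiteDimensional ?_
    rintro ⟨v, hv⟩
    obtain ⟨c, rfl⟩ := hL ▸ hv
    exact ⟨c, rfl⟩
  have hmove : ∀ c : ι → ℝ, x + L c = ∑ i, ((1 - ∑ j, c j) * w i + c i) • f i := by
    intro c
    simp only [L, Fintype.linearCombination_apply, smul_sub, sum_sub_distrib, ← sum_smul,
      add_smul, mul_smul, sum_add_distrib, ← smul_sum, sub_smul, one_smul, x]
    abel
  set O : Set (ι → ℝ) := {c | ∀ i, 0 < (1 - ∑ j, c j) * w i + c i}
  have hO : IsOpen O := by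
    simp only [O, Set.ofPred_forall]
    exact isOpen_iInter_of_finite fun i => isOpen_lt continuous_const (by fun_prop)
  let g : A → A.direction := fun y => ⟨y - x, AffineSubspace.vsub_mem_direction y.2 hx⟩
  have hg : Continuous g := by fun_prop
  rw [mem_intrinsicInterior, affineSpan_convexHull]
  refine ⟨⟨x, hx⟩, mem_interior_iff_mem_nhds.2 ?_, rfl⟩
  refine Filter.mem_of_superset ((hL₀ O hO).preimage hg |>.mem_nhds ⟨0, ?_, ?_⟩) ?_
  · simpa [O] using hw
  · ext; simp [g, L₀]
  · rintro y ⟨c, hcO, hc⟩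
    have hy : (y : E) = x + L c := by
      rw [← sub_eq_iff_eq_add']
      exact congrArg Subtype.val hc.symm
    rw [Set.mem_preimage, hy, hmove]
    refine (convex_convexHull ℝ _).sum_mem (fun i _ => (hcO i).le) ?_
      fun i _ => subset_convexHull ℝ _ (Set.mem_range_self i)
    rw [sum_add_distrib, ← mul_sum, hw1]
    ring

theorem smul_mem_intrinsicInterior_smul {E : Type*} [NormedAddCommGroup E] [NormedSpace ℝ E]
    [FiniteDimensional ℝ E] {s : Set E} {x : E} {t : ℝ} (ht : t ≠ 0)
    (hx : x ∈ intrinsicInterior ℝ s) : t • x ∈ intrinsicInterior ℝ (t • s) := by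
  have h := AffineEquiv.intrinsicInterior_image (LinearEquiv.smulOfNeZero ℝ E t ht).toAffineEquiv s
  rw [← Set.image_smul]
  exact h ▸ Set.mem_image_of_mem _ hx

theorem rho_mk {V : Type} [DecidableEq V] (a b : V) :
    rho s(a, b) = Pi.single a 1 + Pi.single b 1 := by
  funext v
  simp [rho, Pi.single_apply]

theorem sum_rho_perm {V : Type} [Fintype V] [DecidableEq V] (σ : Equiv.Perm V) :
    ∑ v, rho s(v, σ v) = 2 := by
  have hsingle : ∑ v : V, (Pi.single v 1 : V → ℝ) = 1 := by
    funext u; simp [Pi.single_apply]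
  rw [sum_congr rfl fun v _ => rho_mk v (σ v), sum_add_distrib,
    Equiv.sum_comp σ fun v => (Pi.single v 1 : V → ℝ), hsingle, one_add_one_eq_two]

theorem const_mem_intrinsicInterior_edgePolytope {V : Type} [Fintype V] [DecidableEq V]
    [Nonempty V] {G : SimpleGraph V} (σ : Equiv.Perm V)
    (hG : G.edgeSet = Set.range fun v => s(v, σ v)) :
    (fun _ => 2 / (Fintype.card V : ℝ)) ∈ intrinsicInterior ℝ (edgePolytope G) := by
  have hcard : (0 : ℝ) < Fintype.card V := by exact_mod_cast Fintype.card_pos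
  have h := sum_smul_mem_intrinsicInterior_convexHull (fun v => rho s(v, σ v))
    (w := fun _ => (Fintype.card V : ℝ)⁻¹) (fun _ => inv_pos.2 hcard)
    (by simp [sum_const, card_univ, hcard.ne'])
  have hconst : (fun _ => 2 / (Fintype.card V : ℝ)) = (Fintype.card V : ℝ)⁻¹ • (2 : V → ℝ) := by
    funext v
    simp [div_eq_inv_mul]
  rw [← smul_sum, sum_rho_perm] at h
  rwa [edgePolytope, hG, ← Set.range_comp, hconst]

theorem edgeSet_fromRel_perm {V : Type} (σ : Equiv.Perm V) (hσ : ∀ v, σ v ≠ v) :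
    (SimpleGraph.fromRel fun a b => b = σ a).edgeSet = Set.range fun v => s(v, σ v) := by
  ext e
  induction e using Sym2.ind with
  | _ a b =>
    simp only [SimpleGraph.mem_edgeSet, SimpleGraph.fromRel_adj, Set.mem_range, Sym2.eq_iff]
    constructor
    · rintro ⟨-, rfl | rfl⟩
      exacts [⟨a, Or.inl ⟨rfl, rfl⟩⟩, ⟨b, Or.inr ⟨rfl, rfl⟩⟩]
    · rintro ⟨v, ⟨rfl, rfl⟩ | ⟨rfl, rfl⟩⟩
      exacts [⟨(hσ v).symm, Or.inl rfl⟩, ⟨hσ v, Or.inr rfl⟩]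

theorem eq_finRotate_iff {n : ℕ} (a b : Fin n) :
    b = finRotate n a ↔ a.val + 1 = b.val ∨ (a.val = n - 1 ∧ b.val = 0) := by
  cases n with
  | zero => exact a.elim0
  | succ m =>
    rw [Fin.ext_iff, coe_finRotate]
    split_ifs with h <;> rw [Fin.ext_iff, Fin.val_last] at h <;> omega

theorem finRotate_apply_ne {n : ℕ} (hn : 2 ≤ n) (i : Fin n) : finRotate n i ≠ i := by
  obtain ⟨m, rfl⟩ := Nat.exists_eq_add_of_le' hn
  classical
  exact Equiv.Perm.mem_support.1 (support_finRotate ▸ mem_univ i)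

theorem twoCyclesGraph_eq_fromRel (n : ℕ) :
    twoCyclesGraph n =
      SimpleGraph.fromRel fun a b => b = Equiv.prodCongr (Equiv.refl _) (finRotate n) a := by
  unfold twoCyclesGraph
  congr
  funext a b
  simp only [Prod.ext_iff, Equiv.prodCongr_apply, Prod.map, Equiv.coe_refl, id, eq_finRotate_iff,
    eq_comm (a := b.1)]

theorem edgeSet_twoCyclesGraph {n : ℕ} (hn : 2 ≤ n) :
    (twoCyclesGraph n).edgeSet =
      Set.range fun v => s(v, Equiv.prodCongr (Equiv.refl _) (finRotate n) v) := by
  rw [twoCyclesGraph_eq_fromRel]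
  exact edgeSet_fromRel_perm _ fun v h => finRotate_apply_ne hn v.2 (congrArg Prod.snd h)

/-- For the disjoint union `G'` of two `2q`-cycles (`q ≥ 3`), the lattice
point `e₁ + ⋯ + e_{4q}` (the all-ones vector) lies in the relative interior of
`2q · P_{G'}`; hence `codeg(P_{G'}) ≤ 2q`. -/
theorem stmt_4 (q : ℕ) (hq : 3 ≤ q) :
    ((fun _ : Fin 2 × Fin (2 * q) => ((1 : ℤ) : ℝ)) ∈
      intrinsicInterior ℝ (((2 * q : ℕ) : ℝ) • edgePolytope (twoCyclesGraph (2 * q)))) ∧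
    polyCodeg (edgePolytope (twoCyclesGraph (2 * q))) ≤ 2 * q := by
  have : Nonempty (Fin (2 * q)) := ⟨⟨0, by omega⟩⟩
  have hcentroid := const_mem_intrinsicInterior_edgePolytope _
    (edgeSet_twoCyclesGraph (n := 2 * q) (by omega))
  have hdilate := smul_mem_intrinsicInterior_smul (t := ((2 * q : ℕ) : ℝ)) (by positivity)
    hcentroid
  have hone : ((2 * q : ℕ) : ℝ) • (fun _ => 2 / (Fintype.card (Fin 2 × Fin (2 * q)) : ℝ)) =
      fun _ : Fin 2 × Fin (2 * q) => ((1 : ℤ) : ℝ) := by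
    funext v
    simp only [Pi.smul_apply, smul_eq_mul, Fintype.card_prod, Fintype.card_fin]
    push_cast
    field_simp
  rw [hone] at hdilate
  exact ⟨hdilate, Nat.sInf_le ⟨by omega, fun _ => 1, hdilate⟩⟩
end
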